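/- Every residually finite finitely presented semigroup has decidable word problem (McKinsey's algorithm): the set of pairs of words that are equal in the semigroup is decidable, given that the semigroup is residually finite and finitely presented. -/

import Mathlib

/-!
Equality in the presented semigroup is recursively enumerable: it is the equivalence closure of
one-step rewriting, which is primitive recursive, and is witnessed by a finite chain of steps.
Inequality is recursively enumerable as well. By residual finiteness two distinct nonempty words
are separated by a homomorphism `φ` to a finite semigroup `S`, hence by the right action of words
on `S¹`; this action is a transformation semigroup of a finite set, described by one table per
letter, in which the defining relations hold. The empty word is separated from every other word
in the same way, using the trivial semigroup. Post's theorem (a set that is r.e. and co-r.e. is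
decidable) concludes.
-/

/-- One-step rewriting (in either direction one uses `EqvGen`) by the finite
defining relations `R` on words over the finite alphabet `Fin k`. -/
def RwStep {X : Type*} (R : Set (List X × List X)) (u v : List X) : Prop :=
  ∃ l r p s : List X, (l, r) ∈ R ∧ u = p ++ l ++ s ∧ v = p ++ r ++ s

open Encodable Relation

theorem REPred.of_exists_primrecRel {α β : Type*} [Primcodable α] [Primcodable β]
    {p : α → Prop} {q : α → β → Prop} (hq : PrimrecRel q) (h : ∀ a, p a ↔ ∃ b, q a b) :
    REPred p := by
  classical
  have hcheck : Primrec₂ fun a n => (decode (α := β) n).any fun b => decide (q a b) :=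
    (Primrec.option_casesOn (Primrec.decode.comp Primrec.snd) (Primrec.const false)
      (hq.decide.comp (Primrec.fst.comp Primrec.fst) Primrec.snd).to₂).of_eq fun x => by
        dsimp only; cases decode (α := β) x.2 <;> rfl
  refine (Partrec.rfind hcheck.to_comp.partrec₂).dom_re.of_eq fun a => ?_
  simp only [Nat.rfind_dom, PFun.coe_val, Part.mem_some_iff, Part.some_dom, implies_true,
    and_true, eq_comm (a := true), Option.any_eq_true, decide_eq_true_eq, h]
  constructor
  · rintro ⟨n, b, -, hb⟩
    exact ⟨b, hb⟩
  · rintro ⟨b, hb⟩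
    exact ⟨encode b, b, encodek b, hb⟩

/-- `l` lists the steps `(xᵢ, xᵢ₊₁)` of a chain `a = x₀, …, xₙ = b`; the equation says that
consecutive steps link up. -/
theorem Relation.reflTransGen_iff_exists_steps {α : Type*} {r : α → α → Prop} {a b : α} :
    ReflTransGen r a b ↔ ∃ l : List (α × α),
      (∀ s ∈ l, r s.1 s.2) ∧ l.map Prod.fst ++ [b] = a :: l.map Prod.snd := by
  constructor
  · intro h
    induction h using ReflTransGen.head_induction_on with
    | refl => exact ⟨[], by simp⟩
    | @head a c hac _ ih =>
      obtain ⟨l, hl, hlink⟩ := ih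
      exact ⟨(a, c) :: l, by simp_all, by simp [hlink]⟩
  · rintro ⟨l, hl, hlink⟩
    induction l generalizing a with
    | nil =>
      obtain rfl : b = a := by simpa using hlink
      exact .refl
    | cons s l ih =>
      simp only [List.map_cons, List.cons_append, List.cons.injEq] at hlink
      obtain ⟨rfl, hlink⟩ := hlink
      exact .head (hl s (by simp)) (ih (fun t ht => hl t (by simp [ht])) hlink)

theorem PrimrecRel.symmGen {α : Type*} [Primcodable α] {r : α → α → Prop} (hr : PrimrecRel r) :
    PrimrecRel (SymmGen r) :=
  hr.or hr.swap

open Primrec in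
theorem REPred.eqvGen {α : Type*} [Primcodable α] {r : α → α → Prop} (hr : PrimrecRel r) :
    REPred fun p : α × α => EqvGen r p.1 p.2 := by
  refine REPred.of_exists_primrecRel (q := fun p (l : List (α × α)) =>
    (∀ s ∈ l, SymmGen r s.1 s.2) ∧ l.map Prod.fst ++ [p.2] = p.1 :: l.map Prod.snd) ?_ ?_
  · exact ((PrimrecPred.forall_mem_list hr.symmGen).comp snd).and
      (Primrec.eq.comp
        (list_append.comp (list_map snd (fst.comp snd).to₂)
          (list_cons.comp (snd.comp fst) (const [])))
        (list_cons.comp (fst.comp fst) (list_map snd (snd.comp snd).to₂)))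
  · intro p
    rw [← EqvGen.reflTransGen_symmGen, reflTransGen_iff_exists_steps]

theorem RwStep.of_mem {X : Type*} {R : Set (List X × List X)} {l r : List X} (h : (l, r) ∈ R) :
    RwStep R l r :=
  ⟨l, r, [], [], h, by simp, by simp⟩

theorem rwStep_iff_exists_index {X : Type*} {R : Set (List X × List X)} {u v : List X} :
    RwStep R u v ↔ ∃ lr ∈ R, ∃ i < u.length + 1,
      u = u.take i ++ lr.1 ++ u.drop (i + lr.1.length) ∧
        v = u.take i ++ lr.2 ++ u.drop (i + lr.1.length) := by
  constructor
  · rintro ⟨l, r, p, s, hlr, rfl, rfl⟩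
    exact ⟨(l, r), hlr, p.length, by simp, by simp⟩
  · rintro ⟨⟨l, r⟩, hlr, i, -, hu, hv⟩
    exact ⟨l, r, _, _, hlr, hu, hv⟩

section WordAction

variable {α : Type*}

def wordAct (g : α → List ℕ) (w : List α) (i : ℕ) : ℕ :=
  w.foldl (fun j x => (g x).getD j 0) i

variable {g : α → List ℕ}

@[simp]
theorem wordAct_nil (i : ℕ) : wordAct g [] i = i := rfl

@[simp]
theorem wordAct_cons (x : α) (w : List α) (i : ℕ) :
    wordAct g (x :: w) i = wordAct g w ((g x).getD i 0) := rfl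

theorem wordAct_append (a b : List α) (i : ℕ) :
    wordAct g (a ++ b) i = wordAct g b (wordAct g a i) :=
  List.foldl_append ..

theorem wordAct_lt {n : ℕ} (hg : ∀ x, ∀ j ∈ g x, j < n) (w : List α) {i : ℕ} (hi : i < n) :
    wordAct g w i < n := by
  induction w generalizing i with
  | nil => exact hi
  | cons x w ih =>
    refine ih (show (g x).getD i 0 < n from ?_)
    rw [List.getD_eq_getElem?_getD]
    cases hj : (g x)[i]? with
    | none => exact Nat.zero_lt_of_lt hi
    | some j => exact hg x j (List.mem_of_getElem? hj)

/-- The tables `g` define self-maps of `{0, …, n-1}`, and the transformation semigroup they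
generate satisfies the relations `R`. -/
def IsFiniteAction (R : Set (List α × List α)) (n : ℕ) (g : α → List ℕ) : Prop :=
  (∀ x, ∀ j ∈ g x, j < n) ∧ ∀ lr ∈ R, ∀ i < n, wordAct g lr.1 i = wordAct g lr.2 i

theorem IsFiniteAction.wordAct_eq_of_eqvGen {R : Set (List α × List α)} {n : ℕ}
    (hg : IsFiniteAction R n g) {a b : List α} (hab : EqvGen (RwStep R) a b) {i : ℕ}
    (hi : i < n) : wordAct g a i = wordAct g b i := by
  induction hab with
  | rel _ _ hstep =>
    obtain ⟨l, r, p, s, hlr, rfl, rfl⟩ := hstep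
    simp only [wordAct_append, hg.2 _ hlr _ (wordAct_lt hg.1 p hi)]
  | refl => rfl
  | symm _ _ _ ih => exact ih.symm
  | trans _ _ _ _ _ ih₁ ih₂ => exact ih₁.trans ih₂

def SeparatesWords (R : Set (List α × List α)) (u v : List α) (n : ℕ) (g : α → List ℕ) : Prop :=
  IsFiniteAction R n g ∧ ∃ i < n, wordAct g u i ≠ wordAct g v i

theorem SeparatesWords.not_eqvGen {R : Set (List α × List α)} {u v : List α} {n : ℕ}
    (h : SeparatesWords R u v n g) : ¬EqvGen (RwStep R) u v := fun huv =>
  let ⟨_, hi, hne⟩ := h.2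
  hne (h.1.wordAct_eq_of_eqvGen huv hi)

theorem SeparatesWords.symm {R : Set (List α × List α)} {u v : List α} {n : ℕ}
    (h : SeparatesWords R u v n g) : SeparatesWords R v u n g :=
  ⟨h.1, h.2.imp fun _ ⟨hi, hne⟩ => ⟨hi, hne.symm⟩⟩

end WordAction

section Cayley

variable {α : Type*} {N : ℕ} (mul : Fin (N + 1) → Fin (N + 1) → Fin (N + 1))

/-- Right multiplication by `s` on `S¹ = S ∪ {1}` for `S = Fin (N + 1)`, the adjoined identity
being coded by `N + 1`. -/
def rightMulOne (s : Fin (N + 1)) (i : ℕ) : ℕ :=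
  if h : i < N + 1 then mul ⟨i, h⟩ s else s

theorem rightMulOne_lt (s : Fin (N + 1)) (i : ℕ) : rightMulOne mul s i < N + 1 := by
  unfold rightMulOne; split <;> exact Fin.isLt _

theorem rightMulOne_rightMulOne (hassoc : ∀ a b c, mul (mul a b) c = mul a (mul b c))
    (s t : Fin (N + 1)) (i : ℕ) :
    rightMulOne mul t (rightMulOne mul s i) = rightMulOne mul (mul s t) i := by
  rw [rightMulOne, dif_pos (rightMulOne_lt mul s i)]
  unfold rightMulOne
  split <;> simp [hassoc]

def cayleyTables (φ : List α → Fin (N + 1)) (x : α) : List ℕ :=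
  (List.range (N + 2)).map (rightMulOne mul (φ [x]))

variable {mul} {φ : List α → Fin (N + 1)}

theorem wordAct_cayleyTables (hassoc : ∀ a b c, mul (mul a b) c = mul a (mul b c))
    (hhom : ∀ a b : List α, a ≠ [] → b ≠ [] → φ (a ++ b) = mul (φ a) (φ b))
    {w : List α} (hw : w ≠ []) {i : ℕ} (hi : i < N + 2) :
    wordAct (cayleyTables mul φ) w i = rightMulOne mul (φ w) i := by
  induction w generalizing i with
  | nil => exact absurd rfl hw
  | cons x w ih =>
    have hx : (cayleyTables mul φ x).getD i 0 = rightMulOne mul (φ [x]) i := by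
      simp [cayleyTables, List.getD_eq_getElem?_getD, hi]
    rcases eq_or_ne w [] with rfl | hw'
    · simpa using hx
    · rw [wordAct_cons, hx, ih hw' (by have := rightMulOne_lt mul (φ [x]) i; omega),
        rightMulOne_rightMulOne mul hassoc, ← hhom [x] w (by simp) hw', List.singleton_append]

theorem wordAct_cayleyTables_identity (hassoc : ∀ a b c, mul (mul a b) c = mul a (mul b c))
    (hhom : ∀ a b : List α, a ≠ [] → b ≠ [] → φ (a ++ b) = mul (φ a) (φ b))
    {w : List α} (hw : w ≠ []) : wordAct (cayleyTables mul φ) w (N + 1) = φ w := by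
  rw [wordAct_cayleyTables hassoc hhom hw (by omega), rightMulOne, dif_neg (lt_irrefl _)]

theorem isFiniteAction_cayleyTables {R : Set (List α × List α)}
    (hassoc : ∀ a b c, mul (mul a b) c = mul a (mul b c))
    (hhom : ∀ a b : List α, a ≠ [] → b ≠ [] → φ (a ++ b) = mul (φ a) (φ b))
    (hR : ∀ lr ∈ R, lr.1 ≠ [] ∧ lr.2 ≠ [] ∧ φ lr.1 = φ lr.2) :
    IsFiniteAction R (N + 2) (cayleyTables mul φ) := by
  refine ⟨fun x j hj => ?_, fun lr hlr i hi => ?_⟩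
  · obtain ⟨i, -, rfl⟩ := List.mem_map.1 hj
    have := rightMulOne_lt mul (φ [x]) i
    omega
  · obtain ⟨hl, hr, hφ⟩ := hR lr hlr
    rw [wordAct_cayleyTables hassoc hhom hl hi, wordAct_cayleyTables hassoc hhom hr hi, hφ]

theorem separatesWords_cayleyTables {R : Set (List α × List α)}
    (hassoc : ∀ a b c, mul (mul a b) c = mul a (mul b c))
    (hhom : ∀ a b : List α, a ≠ [] → b ≠ [] → φ (a ++ b) = mul (φ a) (φ b))
    (hR : ∀ lr ∈ R, lr.1 ≠ [] ∧ lr.2 ≠ [] ∧ φ lr.1 = φ lr.2)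
    {u v : List α} (hu : u ≠ []) (hv : v ≠ []) (huv : φ u ≠ φ v) :
    SeparatesWords R u v (N + 2) (cayleyTables mul φ) := by
  refine ⟨isFiniteAction_cayleyTables hassoc hhom hR, N + 1, by omega, ?_⟩
  rw [wordAct_cayleyTables_identity hassoc hhom hu, wordAct_cayleyTables_identity hassoc hhom hv]
  exact Fin.val_injective.ne huv

theorem exists_separatesWords_nil {R : Set (List α × List α)}
    (hR : ∀ lr ∈ R, lr.1 ≠ [] ∧ lr.2 ≠ []) {v : List α} (hv : v ≠ []) :
    ∃ n g, SeparatesWords R [] v n g := by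
  refine ⟨2, cayleyTables (N := 0) (fun _ _ => 0) fun _ => 0, isFiniteAction_cayleyTables
    (by simp) (by simp) fun lr hlr => ⟨(hR lr hlr).1, (hR lr hlr).2, rfl⟩, 1, by omega, ?_⟩
  rw [wordAct_nil, wordAct_cayleyTables_identity (by simp) (by simp) hv]
  simp

end Cayley

section Computability

variable {k : ℕ}

open Primrec

theorem primrecRel_rwStep {X : Type*} [Primcodable X] (R : Finset (List X × List X)) :
    PrimrecRel (RwStep (R : Set (List X × List X))) := by
  have hsplit : PrimrecRel fun (i : ℕ) (y : (List X × List X) × List X × List X) =>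
      y.2.1 = y.2.1.take i ++ y.1.1 ++ y.2.1.drop (i + y.1.1.length) ∧
        y.2.2 = y.2.1.take i ++ y.1.2 ++ y.2.1.drop (i + y.1.1.length) := by
    have hu : Primrec fun x : ℕ × (List X × List X) × List X × List X => x.2.2.1 :=
      fst.comp (snd.comp snd)
    have hl : Primrec fun x : ℕ × (List X × List X) × List X × List X => x.2.1.1 :=
      fst.comp (fst.comp snd)
    have hr : Primrec fun x : ℕ × (List X × List X) × List X × List X => x.2.1.2 :=
      snd.comp (fst.comp snd)
    have hpre := list_take.comp fst hu
    have hsuf := list_drop.comp (nat_add.comp fst (list_length.comp hl)) hu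
    exact (Primrec.eq.comp hu (list_append.comp (list_append.comp hpre hl) hsuf)).and
      (Primrec.eq.comp (snd.comp (snd.comp snd)) (list_append.comp (list_append.comp hpre hr) hsuf))
  have hidx : PrimrecRel fun (lr : List X × List X) (uv : List X × List X) =>
      ∃ i < uv.1.length + 1, uv.1 = uv.1.take i ++ lr.1 ++ uv.1.drop (i + lr.1.length) ∧
        uv.2 = uv.1.take i ++ lr.2 ++ uv.1.drop (i + lr.1.length) :=
    have hrange : Primrec fun y : (List X × List X) × List X × List X =>
        List.range (y.2.1.length + 1) :=
      list_range.comp (succ.comp (list_length.comp (fst.comp snd)))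
    PrimrecPred.of_eq (hsplit.exists_mem_list.comp hrange Primrec.id) fun y => by simp
  exact ((PrimrecRel.exists_mem_list hidx).comp (const R.toList) Primrec.id).of_eq fun uv => by
    simp [rwStep_iff_exists_index]

theorem primrec_wordAct {β : Type*} [Primcodable β] {g : β → Fin k → List ℕ}
    {w : β → List (Fin k)} {i : β → ℕ} (hg : Primrec g) (hw : Primrec w) (hi : Primrec i) :
    Primrec fun b => wordAct (g b) (w b) (i b) :=
  list_foldl hw hi ((list_getD 0).comp (fin_app.comp (hg.comp fst) (snd.comp snd))
    (fst.comp snd)).to₂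

theorem primrecRel_isFiniteAction (R : Finset (List (Fin k) × List (Fin k))) :
    PrimrecRel fun (n : ℕ) (g : Fin k → List ℕ) => IsFiniteAction (R : Set _) n g := by
  have hbounded : PrimrecRel fun (x : Fin k) (c : ℕ × (Fin k → List ℕ)) =>
      ∀ j ∈ c.2 x, j < c.1 :=
    nat_lt.forall_mem_list.comp (fin_app.comp (snd.comp snd) fst) (fst.comp snd)
  have hrel : PrimrecRel fun (i : ℕ) (p : (List (Fin k) × List (Fin k)) × ℕ × (Fin k → List ℕ)) =>
      wordAct p.2.2 p.1.1 i = wordAct p.2.2 p.1.2 i :=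
    Primrec.eq.comp (primrec_wordAct (snd.comp (snd.comp snd)) (fst.comp (fst.comp snd)) fst)
      (primrec_wordAct (snd.comp (snd.comp snd)) (snd.comp (fst.comp snd)) fst)
  have hrels : PrimrecRel fun (lr : List (Fin k) × List (Fin k)) (c : ℕ × (Fin k → List ℕ)) =>
      ∀ i ∈ List.range c.1, wordAct c.2 lr.1 i = wordAct c.2 lr.2 i :=
    hrel.forall_mem_list.comp (list_range.comp (fst.comp snd)) Primrec.id
  exact PrimrecPred.of_eq
    ((hbounded.forall_mem_list.comp (const (List.finRange k)) Primrec.id).and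
      (hrels.forall_mem_list.comp (const R.toList) Primrec.id))
    fun c => by simp [IsFiniteAction]

theorem primrecRel_separatesWords (R : Finset (List (Fin k) × List (Fin k))) :
    PrimrecRel fun (uv : List (Fin k) × List (Fin k)) (c : ℕ × (Fin k → List ℕ)) =>
      SeparatesWords (R : Set _) uv.1 uv.2 c.1 c.2 := by
  have hne : PrimrecRel fun (i : ℕ) (p : (List (Fin k) × List (Fin k)) × ℕ × (Fin k → List ℕ)) =>
      wordAct p.2.2 p.1.1 i ≠ wordAct p.2.2 p.1.2 i :=
    (Primrec.eq.comp (primrec_wordAct (snd.comp (snd.comp snd)) (fst.comp (fst.comp snd)) fst)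
      (primrec_wordAct (snd.comp (snd.comp snd)) (snd.comp (fst.comp snd)) fst)).not
  exact PrimrecPred.of_eq
    (((primrecRel_isFiniteAction R).comp (fst.comp snd) (snd.comp snd)).and
      (hne.exists_mem_list.comp (list_range.comp (fst.comp snd)) Primrec.id))
    fun c => by simp [SeparatesWords]

end Computability

/-- McKinsey's algorithm: a finitely presented semigroup (presented by finitely
many relations `R` over a finite alphabet, equality being the congruence
generated by `R`) which is residually finite has decidable (computable) word
problem. -/
theorem mckinsey_word_problem_decidable (k : ℕ)
    (R : Finset (List (Fin k) × List (Fin k)))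
    (hR : ∀ p ∈ R, p.1 ≠ ([] : List (Fin k)) ∧ p.2 ≠ ([] : List (Fin k)))
    (hrf : ∀ u v : List (Fin k), u ≠ [] → v ≠ [] →
      ¬ Relation.EqvGen (RwStep (↑R : Set (List (Fin k) × List (Fin k)))) u v →
      ∃ (N : ℕ) (mul : Fin (N + 1) → Fin (N + 1) → Fin (N + 1))
        (φ : List (Fin k) → Fin (N + 1)),
        (∀ a b c, mul (mul a b) c = mul a (mul b c)) ∧
        (∀ a b : List (Fin k), a ≠ [] → b ≠ [] → φ (a ++ b) = mul (φ a) (φ b)) ∧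
        (∀ a b : List (Fin k),
          Relation.EqvGen (RwStep (↑R : Set (List (Fin k) × List (Fin k)))) a b →
            φ a = φ b) ∧
        (∀ t : Fin (N + 1), ∃ a : List (Fin k), a ≠ [] ∧ φ a = t) ∧
        φ u ≠ φ v) :
    ComputablePred fun p : List (Fin k) × List (Fin k) =>
      Relation.EqvGen (RwStep (↑R : Set (List (Fin k) × List (Fin k)))) p.1 p.2 := by
  rw [ComputablePred.computable_iff_re_compl_re']
  refine ⟨REPred.eqvGen (primrecRel_rwStep R),
    REPred.of_exists_primrecRel (primrecRel_separatesWords R) ?_⟩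
  rintro ⟨u, v⟩
  refine ⟨fun huv => ?_, fun ⟨c, hc⟩ => hc.not_eqvGen⟩
  rcases eq_or_ne u [] with rfl | hu
  · obtain ⟨n, g, hsep⟩ := exists_separatesWords_nil hR fun hv => huv (hv ▸ EqvGen.refl _)
    exact ⟨(n, g), hsep⟩
  rcases eq_or_ne v [] with rfl | hv
  · obtain ⟨n, g, hsep⟩ := exists_separatesWords_nil hR hu
    exact ⟨(n, g), hsep.symm⟩
  obtain ⟨N, mul, φ, hassoc, hhom, hφ, -, hne⟩ := hrf u v hu hv huv
  refine ⟨(N + 2, cayleyTables mul φ), separatesWords_cayleyTables hassoc hhom ?_ hu hv hne⟩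
  exact fun lr hlr => ⟨(hR lr hlr).1, (hR lr hlr).2, hφ _ _ (.rel _ _ (.of_mem hlr))⟩
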